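/- Let c ∈ ℂ be nonzero and let h ∈ ℂ[[X,Y]] be a formal power series in two variables. If the substitution Y ↦ c·X annihilates h (i.e. the one-variable series Σ_n (Σ_{i+j=n} coeff_{(i,j)}(h)·c^j)·X^n is zero), then (Y − c·X) divides h in ℂ[[X,Y]]. -/

import Mathlib

/-- The substitution `Y ↦ c·X` from `ℂ[[X,Y]]` to `ℂ[[X]]`:
`(Σ h_{ij} Xⁱ Yʲ) ↦ Σ_n (Σ_{i+j=n} h_{ij} cʲ) Xⁿ`. -/
noncomputable def substYcX (c : ℂ) (h : MvPowerSeries (Fin 2) ℂ) : PowerSeries ℂ :=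
  PowerSeries.mk fun n => ∑ p ∈ Finset.HasAntidiagonal.antidiagonal n,
    MvPowerSeries.coeff (R := ℂ) (Finsupp.single (0 : Fin 2) p.1 + Finsupp.single 1 p.2) h * c ^ p.2

/-!
Write `h = Σ h_{ij} XⁱYʲ`. Comparing coefficients in `h = (Y - cX) q` determines `q` one
`X`-degree at a time, `q_{ij} = h_{i,j+1} + c q_{i-1,j+1}`, i.e. `q_{ij} = Σ_{a+b=i} cᵇ h_{a,j+1+b}`.
This `q` satisfies every coefficient equation except those at `XⁿY⁰`, where the defect is
`Σ_{a+b=n} cᵇ h_{a,b}`, the coefficient of `Xⁿ` in `h(X, cX)`.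
-/

open Finsupp Finset

noncomputable section

namespace MvPowerSeries

section Semiring

variable {R : Type*} [Semiring R]

theorem coeff_single_add_X_mul {σ : Type*} (s : σ) (m : σ →₀ ℕ) (g : MvPowerSeries σ R) :
    coeff (single s 1 + m) (X s * g) = coeff m g := by
  rw [X_def, coeff_add_monomial_mul, one_mul]

theorem coeff_X_mul_of_apply_eq_zero {σ : Type*} {s : σ} {m : σ →₀ ℕ} (hm : m s = 0)
    (g : MvPowerSeries σ R) : coeff m (X s * g) = 0 := by
  rw [X_def, coeff_monomial_mul, if_neg]
  simp [single_le_iff, hm]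

/-- The coefficient of `Xⁱ Yʲ`, where `X = X 0` and `Y = X 1`. -/
def coeff₂ (h : MvPowerSeries (Fin 2) R) (i j : ℕ) : R :=
  coeff (single 0 i + single 1 j) h

def ofCoeff₂ (a : ℕ → ℕ → R) : MvPowerSeries (Fin 2) R :=
  fun m => a (m 0) (m 1)

@[simp]
theorem coeff₂_ofCoeff₂ (a : ℕ → ℕ → R) (i j : ℕ) : coeff₂ (ofCoeff₂ a) i j = a i j := by
  change a ((single 0 i + single 1 j : Fin 2 →₀ ℕ) 0) ((single 0 i + single 1 j : Fin 2 →₀ ℕ) 1) =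
    a i j
  simp

theorem ext₂ {f g : MvPowerSeries (Fin 2) R} (hfg : ∀ i j, coeff₂ f i j = coeff₂ g i j) :
    f = g := by
  ext m
  have hm : m = single 0 (m 0) + single 1 (m 1) := by
    ext a
    fin_cases a <;> simp
  rw [hm]
  exact hfg _ _

theorem coeff₂_X_zero_mul_zero (g : MvPowerSeries (Fin 2) R) (j : ℕ) :
    coeff₂ (X 0 * g) 0 j = 0 :=
  coeff_X_mul_of_apply_eq_zero (by simp) g

theorem coeff₂_X_zero_mul_succ (g : MvPowerSeries (Fin 2) R) (i j : ℕ) :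
    coeff₂ (X 0 * g) (i + 1) j = coeff₂ g i j := by
  rw [coeff₂, add_comm i, single_add, add_assoc, coeff_single_add_X_mul, coeff₂]

theorem coeff₂_X_one_mul_zero (g : MvPowerSeries (Fin 2) R) (i : ℕ) :
    coeff₂ (X 1 * g) i 0 = 0 :=
  coeff_X_mul_of_apply_eq_zero (by simp) g

theorem coeff₂_X_one_mul_succ (g : MvPowerSeries (Fin 2) R) (i j : ℕ) :
    coeff₂ (X 1 * g) i (j + 1) = coeff₂ g i j := by
  rw [coeff₂, add_comm j, single_add, add_left_comm, coeff_single_add_X_mul, coeff₂]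

def diagSum (c : R) (h : MvPowerSeries (Fin 2) R) (n j : ℕ) : R :=
  ∑ p ∈ antidiagonal n, c ^ p.2 * coeff₂ h p.1 (j + p.2)

theorem diagSum_zero (c : R) (h : MvPowerSeries (Fin 2) R) (j : ℕ) :
    diagSum c h 0 j = coeff₂ h 0 j := by
  simp [diagSum]

theorem diagSum_succ (c : R) (h : MvPowerSeries (Fin 2) R) (n j : ℕ) :
    diagSum c h (n + 1) j = coeff₂ h (n + 1) j + c * diagSum c h n (j + 1) := by
  rw [diagSum, diagSum, Nat.sum_antidiagonal_succ', Finset.mul_sum]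
  simp only [pow_zero, one_mul, add_zero, pow_succ', mul_assoc, add_assoc, add_comm 1]

def lineQuotient (c : R) (h : MvPowerSeries (Fin 2) R) : MvPowerSeries (Fin 2) R :=
  ofCoeff₂ fun i j => diagSum c h i (j + 1)

end Semiring

section Ring

variable {R : Type*} [Ring R]

theorem coeff₂_sub_C_mul_X_mul (c : R) (g : MvPowerSeries (Fin 2) R) (i j : ℕ) :
    coeff₂ ((X 1 - C c * X 0) * g) i j = coeff₂ (X 1 * g) i j - c * coeff₂ (X 0 * g) i j := by
  simp only [coeff₂, sub_mul, mul_assoc, map_sub, coeff_C_mul]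

theorem coeff₂_sub_C_mul_X_mul_lineQuotient (c : R) (h : MvPowerSeries (Fin 2) R) (i j : ℕ) :
    coeff₂ ((X 1 - C c * X 0) * lineQuotient c h) i j =
      coeff₂ h i j - if j = 0 then diagSum c h i 0 else 0 := by
  rw [coeff₂_sub_C_mul_X_mul]
  rcases i with _ | i <;> rcases j with _ | j
  · simp [coeff₂_X_one_mul_zero, coeff₂_X_zero_mul_zero, diagSum_zero]
  · simp [coeff₂_X_one_mul_succ, coeff₂_X_zero_mul_zero, lineQuotient, diagSum_zero]
  · simp [coeff₂_X_one_mul_zero, coeff₂_X_zero_mul_succ, lineQuotient, diagSum_succ]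
  · simp [coeff₂_X_one_mul_succ, coeff₂_X_zero_mul_succ, lineQuotient, diagSum_succ]

theorem eq_sub_C_mul_X_mul_lineQuotient (c : R) (h : MvPowerSeries (Fin 2) R)
    (hz : ∀ n, diagSum c h n 0 = 0) : h = (X 1 - C c * X 0) * lineQuotient c h :=
  ext₂ fun i j => by simp [coeff₂_sub_C_mul_X_mul_lineQuotient, hz]

end Ring

end MvPowerSeries

end

open MvPowerSeries PowerSeries in
theorem coeff_substYcX (c : ℂ) (h : MvPowerSeries (Fin 2) ℂ) (n : ℕ) :
    coeff n (substYcX c h) = diagSum c h n 0 := by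
  simp only [substYcX, coeff_mk, diagSum, coeff₂, zero_add, mul_comm]

theorem vanishing_on_line_divisible_general (c : ℂ)
    (h : MvPowerSeries (Fin 2) ℂ) (hz : substYcX c h = 0) :
    ∃ g : MvPowerSeries (Fin 2) ℂ,
      h = (MvPowerSeries.X 1 - MvPowerSeries.C (σ := Fin 2) (R := ℂ) c * MvPowerSeries.X 0) * g := by
  refine ⟨MvPowerSeries.lineQuotient c h, MvPowerSeries.eq_sub_C_mul_X_mul_lineQuotient c h ?_⟩
  intro n
  rw [← coeff_substYcX, hz, map_zero]

/-- If the substitution `Y ↦ cX` (with `c ≠ 0`) annihilates `h ∈ ℂ[[X,Y]]`,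
then `Y − cX` divides `h`. -/
theorem vanishing_on_line_divisible (c : ℂ) (hc : c ≠ 0)
    (h : MvPowerSeries (Fin 2) ℂ) (hz : substYcX c h = 0) :
    ∃ g : MvPowerSeries (Fin 2) ℂ,
      h = (MvPowerSeries.X 1 - MvPowerSeries.C (σ := Fin 2) (R := ℂ) c * MvPowerSeries.X 0) * g :=
  vanishing_on_line_divisible_general c h hz
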